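/- arXiv:2103.07158 — 9 statements merged into one kernel-verified Lean document; each statement's English description precedes it below -/
import Mathlib

section
/- If X is a geodesic metric space and F : X × [0,1] → X is a strict deformation contraction of X onto a subspace A ⊆ X, then A is geodesically convex in X, i.e., every geodesic in X between two points of A is contained in A. -/
open Set

/-- If `X` is a geodesic metric space and `F` is a strict deformation contraction of `X`
onto `A ⊆ X`, then `A` is geodesically convex: every geodesic in `X` between two points of
`A` is contained in `A`. -/
theorem stmt_0 {X : Type*} [MetricSpace X]
    (hgeo : ∀ x y : X, x ≠ y → ∃ g : ℝ → X,
      (∀ s ∈ Icc 0 (dist x y), ∀ t ∈ Icc 0 (dist x y), dist (g s) (g t) = |s - t|) ∧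
      g 0 = x ∧ g (dist x y) = y)
    (A : Set X) (F : X → ℝ → X)
    (hF0 : ∀ x : X, F x 0 = x)
    (hF1 : ∀ x : X, F x 1 ∈ A)
    (hFA : ∀ a ∈ A, ∀ t ∈ Icc (0:ℝ) 1, F a t = a)
    (hmono : ∀ x y : X, ∀ t ∈ Icc (0:ℝ) 1, ∀ t' ∈ Icc (0:ℝ) 1, t ≤ t' →
      dist (F x t') (F y t') ≤ dist (F x t) (F y t))
    (hstrict : ∀ x : X, x ∉ A → ∀ y : X, x ≠ y →
      ∀ t ∈ Icc (0:ℝ) 1, ∀ t' ∈ Icc (0:ℝ) 1, t < t' →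
      dist (F x t') (F y t') < dist (F x t) (F y t))
    (a b : X) (ha : a ∈ A) (hb : b ∈ A)
    (g : ℝ → X)
    (hg : ∀ s ∈ Icc 0 (dist a b), ∀ t ∈ Icc 0 (dist a b), dist (g s) (g t) = |s - t|)
    (hga : g 0 = a) (hgb : g (dist a b) = b) :
    ∀ s ∈ Icc 0 (dist a b), g s ∈ A := by
  intro s hs
  by_contra hpA
  have hd0 : (0:ℝ) ≤ dist a b := dist_nonneg
  obtain ⟨hs0, hsd⟩ := hs
  have h0 : (0:ℝ) ∈ Icc 0 (dist a b) := ⟨le_refl _, hd0⟩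
  have hdmem : dist a b ∈ Icc 0 (dist a b) := ⟨hd0, le_refl _⟩
  have hpa : dist (g s) a = s := by
    rw [← hga, hg s ⟨hs0, hsd⟩ 0 h0]
    simp [abs_of_nonneg hs0]
  have hpb : dist (g s) b = dist a b - s := by
    have := hg s ⟨hs0, hsd⟩ _ hdmem
    rw [hgb] at this
    rw [this, abs_of_nonpos (by linarith), neg_sub]
  have hne_a : g s ≠ a := fun h => hpA (h ▸ ha)
  have hne_b : g s ≠ b := fun h => hpA (h ▸ hb)
  have h01 : (0:ℝ) ∈ Icc (0:ℝ) 1 := ⟨le_refl _, one_pos.le⟩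
  have h11 : (1:ℝ) ∈ Icc (0:ℝ) 1 := ⟨one_pos.le, le_refl _⟩
  have h1 := hstrict (g s) hpA a hne_a 0 h01 1 h11 one_pos
  have h2 := hstrict (g s) hpA b hne_b 0 h01 1 h11 one_pos
  rw [hF0, hF0, hFA a ha 1 h11] at h1
  rw [hF0, hF0, hFA b hb 1 h11] at h2
  have htri : dist a b ≤ dist a (F (g s) 1) + dist (F (g s) 1) b := dist_triangle _ _ _
  rw [dist_comm a (F (g s) 1)] at htri
  linarith
end

section
/- If X is a geodesic metric space and F : X × [0,1] → X is a deformation contraction of X onto a subspace A ⊆ X, then A equipped with the subspace metric is itself a geodesic metric space. -/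
open Set

/-- If `X` is a geodesic metric space and `F` is a deformation contraction of `X` onto
`A ⊆ X`, then `A` (with the subspace metric) is itself a geodesic metric space: any two
distinct points of `A` are joined by a geodesic lying in `A`. -/
theorem stmt_1 {X : Type*} [MetricSpace X]
    (hgeo : ∀ x y : X, x ≠ y → ∃ g : ℝ → X,
      (∀ s ∈ Icc 0 (dist x y), ∀ t ∈ Icc 0 (dist x y), dist (g s) (g t) = |s - t|) ∧
      g 0 = x ∧ g (dist x y) = y)
    (A : Set X) (F : X → ℝ → X)
    (hF0 : ∀ x : X, F x 0 = x)
    (hF1 : ∀ x : X, F x 1 ∈ A)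
    (hFA : ∀ a ∈ A, ∀ t ∈ Icc (0:ℝ) 1, F a t = a)
    (hmono : ∀ x y : X, ∀ t ∈ Icc (0:ℝ) 1, ∀ t' ∈ Icc (0:ℝ) 1, t ≤ t' →
      dist (F x t') (F y t') ≤ dist (F x t) (F y t)) :
    ∀ x ∈ A, ∀ y ∈ A, x ≠ y → ∃ g : ℝ → X,
      (∀ s ∈ Icc 0 (dist x y), ∀ t ∈ Icc 0 (dist x y), dist (g s) (g t) = |s - t|) ∧
      g 0 = x ∧ g (dist x y) = y ∧ ∀ s ∈ Icc 0 (dist x y), g s ∈ A := by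
  intro x hx y hy hxy
  obtain ⟨g, hiso, hg0, hgd⟩ := hgeo x y hxy
  set d := dist x y with hd
  have hd0 : (0:ℝ) ≤ d := dist_nonneg
  have key : ∀ u ∈ Icc 0 d, ∀ v ∈ Icc 0 d,
      dist (F (g u) 1) (F (g v) 1) ≤ |u - v| := by
    intro u hu v hv
    calc dist (F (g u) 1) (F (g v) 1) ≤ dist (F (g u) 0) (F (g v) 0) :=
          hmono _ _ 0 (by norm_num) 1 (by norm_num) zero_le_one
      _ = |u - v| := by rw [hF0, hF0, hiso u hu v hv]
  have h0 : F (g 0) 1 = x := by rw [hg0, hFA x hx 1 (by norm_num)]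
  have hD : F (g d) 1 = y := by rw [hgd, hFA y hy 1 (by norm_num)]
  refine ⟨fun s => F (g s) 1, ?_, h0, hD, fun s _ => hF1 _⟩
  intro s hs t ht
  have hub := key s hs t ht
  have tri := dist_triangle4 (F (g 0) 1) (F (g s) 1) (F (g t) 1) (F (g d) 1)
  have tri' := dist_triangle4 (F (g 0) 1) (F (g t) 1) (F (g s) 1) (F (g d) 1)
  rw [h0, hD] at tri tri'
  have t1 : dist (F (g 0) 1) (F (g s) 1) ≤ s := by
    have := key 0 ⟨le_refl 0, hd0⟩ s hs
    rwa [abs_of_nonpos (by linarith [hs.1]), neg_sub, sub_zero] at this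
  have t1' : dist (F (g 0) 1) (F (g t) 1) ≤ t := by
    have := key 0 ⟨le_refl 0, hd0⟩ t ht
    rwa [abs_of_nonpos (by linarith [ht.1]), neg_sub, sub_zero] at this
  have t2 : dist (F (g t) 1) (F (g d) 1) ≤ d - t := by
    have := key t ht d ⟨hd0, le_refl d⟩
    rwa [abs_of_nonpos (by linarith [ht.2]), neg_sub] at this
  have t2' : dist (F (g s) 1) (F (g d) 1) ≤ d - s := by
    have := key s hs d ⟨hd0, le_refl d⟩
    rwa [abs_of_nonpos (by linarith [hs.2]), neg_sub] at this
  rw [h0] at t1 t1'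
  rw [hD] at t2 t2'
  rw [← hd] at tri tri'
  show dist (F (g s) 1) (F (g t) 1) = |s - t|
  rcases le_total s t with h | h
  · rw [abs_of_nonpos (by linarith)]
    have hsym : dist (F (g s) 1) (F (g t) 1) = dist (F (g t) 1) (F (g s) 1) := dist_comm _ _
    have hlb : t - s ≤ dist (F (g s) 1) (F (g t) 1) := by linarith
    have : |s - t| = t - s := by rw [abs_of_nonpos (by linarith)]; ring
    linarith [hub, this ▸ hub]
  · rw [abs_of_nonneg (by linarith)]
    have hsym : dist (F (g t) 1) (F (g s) 1) = dist (F (g s) 1) (F (g t) 1) := dist_comm _ _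
    have hlb : s - t ≤ dist (F (g s) 1) (F (g t) 1) := by linarith
    have : |s - t| = s - t := abs_of_nonneg (by linarith)
    linarith [hub, this ▸ hub]
end

section
/- Let A ⊆ X be a subspace of a metric space and r > 0. If the open r-neighborhood N(A,r) of A in X deformation contracts onto A, then for every finite subset σ ⊆ A, the intersection of the open balls B_X(z,r) over z ∈ σ is nonempty in X if and only if the intersection of the balls B_A(z,r) (taken in A with the subspace metric) is nonempty in A. In other words, Cech_A(A,r) = Cech_X(A,r). -/
open Set

/-- If the open `r`-neighborhood `N(A,r)` of `A` in `X` deformation contracts onto `A`,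
then for every (nonempty) finite subset `σ ⊆ A`, the intersection of the open balls
`B_X(z,r)`, `z ∈ σ`, is nonempty in `X` iff the intersection of the balls `B_A(z,r)` is
nonempty in `A`; i.e. `Cech_A(A,r) = Cech_X(A,r)`. -/
theorem stmt_2 {X : Type*} [MetricSpace X] (A : Set X) (r : ℝ) (hr : 0 < r)
    (N : Set X) (hNdef : N = {x : X | ∃ a ∈ A, dist x a < r})
    (F : X → ℝ → X)
    (hF0 : ∀ x ∈ N, F x 0 = x)
    (hF1 : ∀ x ∈ N, F x 1 ∈ A)
    (hFmem : ∀ x ∈ N, ∀ t ∈ Icc (0:ℝ) 1, F x t ∈ N)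
    (hFA : ∀ a ∈ A, ∀ t ∈ Icc (0:ℝ) 1, F a t = a)
    (hmono : ∀ x ∈ N, ∀ y ∈ N, ∀ t ∈ Icc (0:ℝ) 1, ∀ t' ∈ Icc (0:ℝ) 1, t ≤ t' →
      dist (F x t') (F y t') ≤ dist (F x t) (F y t)) :
    ∀ σ : Finset X, ↑σ ⊆ A → σ.Nonempty →
      ((∃ w : X, ∀ z ∈ σ, dist z w < r) ↔ (∃ w ∈ A, ∀ z ∈ σ, dist z w < r)) := by
  intro σ hσA hσne
  constructor
  · rintro ⟨w, hw⟩
    obtain ⟨z0, hz0⟩ := hσne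
    have hwN : w ∈ N := by
      rw [hNdef]
      exact ⟨z0, hσA hz0, by rw [dist_comm]; exact hw z0 hz0⟩
    refine ⟨F w 1, hF1 w hwN, fun z hz => ?_⟩
    have hzA : z ∈ A := hσA hz
    have hzN : z ∈ N := by
      rw [hNdef]; exact ⟨z, hzA, by simp [hr]⟩
    have h01 : (0:ℝ) ∈ Icc (0:ℝ) 1 := by constructor <;> norm_num
    have h11 : (1:ℝ) ∈ Icc (0:ℝ) 1 := by constructor <;> norm_num
    calc dist z (F w 1) = dist (F z 1) (F w 1) := by rw [hFA z hzA 1 h11]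
      _ ≤ dist (F z 0) (F w 0) := hmono z hzN w hwN 0 h01 1 h11 zero_le_one
      _ = dist z w := by rw [hF0 z hzN, hF0 w hwN]
      _ < r := hw z hz
  · rintro ⟨w, _, hw⟩
    exact ⟨w, hw⟩
end

section
/- Let (A, d) be a loop of circumference 1 (a metric space homeomorphic to a circle, where lengths of arcs are measured and total length is 1), let r > 1/3, and let L = (x_0, x_1, …, x_k, x_{k+1} = x_0) be an (r − 1/3)-sample of A (consecutive closed arcs between x_i and x_{i+1} along A have diameter, hence length, less than r − 1/3). Then, fixing an orientation of A and setting t_0 = 0, there exist indices t_0 < t_1 < t_2 among {0,…,k} such that x_{t_0} ≺ x_{t_1} ≺ x_{t_2} ≺ x_{t_0} in the cyclic order and the lengths of the closed arcs [x_{t_0}, x_{t_1}], [x_{t_1}, x_{t_2}], [x_{t_2}, x_{t_0}] along A are each less than r. -/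
/-- Let `A` be a loop of circumference `1`, parametrized by arc length, and let
`0 = s 0 ≤ s 1 ≤ ⋯ ≤ s (k+1) = 1` be the arc-length coordinates of an `(r − 1/3)`-sample
`x_0, …, x_k, x_{k+1} = x_0` (each consecutive arc has length `s (i+1) − s i < r − 1/3`),
with `r > 1/3`. Then (fixing `t_0 = 0`) there are indices `0 < t₁ < t₂ ≤ k` so that the
three closed arcs `[x_0, x_{t₁}]`, `[x_{t₁}, x_{t₂}]`, `[x_{t₂}, x_0]` along the loop have
lengths `s t₁`, `s t₂ − s t₁`, `1 − s t₂`, each less than `r`. -/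
theorem stmt_8 (r : ℝ) (hr : 1/3 < r) (k : ℕ) (hk : 2 ≤ k) (s : ℕ → ℝ)
    (h0 : s 0 = 0) (h1 : s (k + 1) = 1)
    (hmono : ∀ i ≤ k, s i ≤ s (i + 1))
    (hstep : ∀ i ≤ k, s (i + 1) - s i < r - 1/3) :
    ∃ t₁ t₂ : ℕ, 0 < t₁ ∧ t₁ < t₂ ∧ t₂ ≤ k ∧
      s t₁ < r ∧ s t₂ - s t₁ < r ∧ 1 - s t₂ < r := by
  have hstepk := hstep k le_rfl
  rw [h1] at hstepk
  by_cases hex : ∃ i, i ≤ k ∧ 1/3 ≤ s i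
  · -- main case
    classical
    have hexP : ∃ i, 1/3 ≤ s i := ⟨hex.choose, hex.choose_spec.2⟩
    set t₁ := Nat.find hexP with ht₁def
    have ht₁P : 1/3 ≤ s t₁ := Nat.find_spec hexP
    have ht₁le : t₁ ≤ k :=
      (Nat.find_min' hexP hex.choose_spec.2).trans hex.choose_spec.1
    have ht₁pos : 0 < t₁ := by
      rcases Nat.eq_zero_or_pos t₁ with h | h
      · exfalso; rw [h] at ht₁P; rw [h0] at ht₁P; linarith
      · exact h
    have hprev : s (t₁ - 1) < 1/3 := by
      have := Nat.find_min hexP (m := t₁ - 1) (by omega)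
      linarith [not_le.mp this]
    have hstept : s (t₁ - 1 + 1) - s (t₁ - 1) < r - 1/3 := hstep (t₁ - 1) (by omega)
    have ht₁r : s t₁ < r := by
      have : t₁ - 1 + 1 = t₁ := by omega
      rw [this] at hstept; linarith
    rcases eq_or_lt_of_le ht₁le with heq | hlt
    · -- t₁ = k : use (k-1, k)
      refine ⟨k - 1, k, by omega, by omega, le_rfl, ?_, ?_, by linarith⟩
      · have hp : s (k - 1) < 1/3 := by
          have := Nat.find_min hexP (m := k - 1) (by omega)
          linarith [not_le.mp this]
        linarith
      · have hp : s (k - 1) < 1/3 := by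
          have := Nat.find_min hexP (m := k - 1) (by omega)
          linarith [not_le.mp this]
        have h2 : s (k - 1 + 1) - s (k - 1) < r - 1/3 := hstep (k - 1) (by omega)
        have hkk : k - 1 + 1 = k := by omega
        rw [hkk] at h2
        linarith
    · -- t₁ < k : pick t₂ minimal > t₁ with 1 - r < s t₂
      have hsk : 1 - r < s k := by linarith
      have hexQ : ∃ j, t₁ < j ∧ 1 - r < s j := ⟨k, hlt, hsk⟩
      set t₂ := Nat.find hexQ with ht₂def
      obtain ⟨ht₂gt, ht₂P⟩ := Nat.find_spec hexQ
      have ht₂le : t₂ ≤ k := Nat.find_min' hexQ ⟨hlt, hsk⟩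
      refine ⟨t₁, t₂, ht₁pos, ht₂gt, ht₂le, ht₁r, ?_, by linarith⟩
      rcases eq_or_lt_of_le (Nat.succ_le_of_lt ht₂gt) with heq | hlt2
      · -- t₂ = t₁ + 1
        have hst := hstep t₁ ht₁le
        have heq' : t₂ = t₁ + 1 := by omega
        rw [heq']
        linarith
      · have hmin := Nat.find_min hexQ (m := t₂ - 1) (by omega)
        push_neg at hmin
        have hprev2 : s (t₂ - 1) ≤ 1 - r := hmin (by omega)
        have h2 : s (t₂ - 1 + 1) - s (t₂ - 1) < r - 1/3 := hstep (t₂ - 1) (by omega)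
        have hkk : t₂ - 1 + 1 = t₂ := by omega
        rw [hkk] at h2
        linarith
  · push_neg at hex
    have hsk : s k < 1/3 := hex k le_rfl
    have hr1 : 1 < r := by linarith
    have hs1 : s 1 < r := by have := hstep 0 (by omega); linarith
    have hs2 : s 2 - s 1 < r := by have := hstep 1 (by omega); linarith
    have hs2' : 0 ≤ s 2 := by
      have a := hmono 0 (by omega); have b := hmono 1 (by omega); linarith
    exact ⟨1, 2, by omega, by omega, hk, hs1, hs2, by linarith⟩
end

section
/- Let S be the circle of circumference 1 with geodesic metric, let l ≥ 1 be an integer, and for t ∈ [0, 1/(2l+1)) define β_t = { (t + j/(2l+1)) mod 1 : j = 0, 1, …, 2l } (a set of 2l+1 equally spaced points). Then: (a) β_t has diameter exactly l/(2l+1); and (b) if a point x ∈ S satisfies d(x, y) ≤ l/(2l+1) for all y ∈ β_t, then x ∈ β_t. Consequently there is no point x ∈ S with d(x,y) < l/(2l+1) for all y ∈ β_t. -/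
open Set

private lemma helperH (l : ℕ) (hl : 1 ≤ l) (w : ℝ) (hw0 : 0 < w)
    (hw1 : w < 1 / (2 * (l:ℝ) + 1)) (m : ℤ) :
    (l:ℝ) / (2 * (l:ℝ) + 1) < |w + (l:ℝ) / (2 * (l:ℝ) + 1) - m| := by
  have hl1 : (1:ℝ) ≤ l := by exact_mod_cast hl
  set c : ℝ := 2 * (l:ℝ) + 1 with hc
  have hc0 : (0:ℝ) < c := by rw [hc]; linarith
  have hsum : (l:ℝ)/c + (l:ℝ)/c + 1/c = 1 := by field_simp; rw [hc]; ring
  have hlc0 : 0 < (l:ℝ)/c := by positivity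
  rcases le_or_gt m 0 with h | h
  · have hm : (m : ℝ) ≤ 0 := by exact_mod_cast h
    exact lt_abs.mpr (Or.inl (by linarith))
  · have hm : (1 : ℝ) ≤ m := by exact_mod_cast h
    exact lt_abs.mpr (Or.inr (by push_cast; linarith))

private lemma helperG (l : ℕ) (hl : 1 ≤ l) (k : ℤ) (hk1 : -(2*(l:ℤ)) ≤ k) (hk2 : k ≤ 2*l) :
    ∃ z : ℤ, |(k:ℝ) / (2 * (l:ℝ) + 1) - z| ≤ (l:ℝ) / (2 * (l:ℝ) + 1) := by
  have hl1 : (1:ℝ) ≤ l := by exact_mod_cast hl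
  set c : ℝ := 2 * (l:ℝ) + 1 with hc
  have hc0 : (0:ℝ) < c := by rw [hc]; linarith
  have key : ∀ z : ℤ, |(k:ℝ) - z * c| ≤ l → |(k:ℝ)/c - z| ≤ (l:ℝ)/c := by
    intro z hz
    have : (k:ℝ)/c - z = ((k:ℝ) - z * c)/c := by field_simp
    rw [this, abs_div, abs_of_pos hc0]
    gcongr
  rcases le_or_gt k l with h1 | h1
  · rcases le_or_gt (-(l:ℤ)) k with h2 | h2
    · refine ⟨0, key 0 ?_⟩
      have h1' : (k:ℝ) ≤ l := by exact_mod_cast h1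
      have h2' : -(l:ℝ) ≤ k := by exact_mod_cast h2
      rw [abs_le]; constructor <;> push_cast <;> linarith
    · refine ⟨-1, key (-1) ?_⟩
      have h2' : (k:ℝ) ≤ -(l:ℝ) - 1 := by
        have : k ≤ -(l:ℤ) - 1 := by omega
        exact_mod_cast this
      have hk1' : -(2*(l:ℝ)) ≤ k := by exact_mod_cast hk1
      rw [abs_le]; constructor <;> push_cast <;> rw [hc] <;> linarith
  · refine ⟨1, key 1 ?_⟩
    have h1' : (l:ℝ) + 1 ≤ k := by
      have : (l:ℤ) + 1 ≤ k := by omega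
      exact_mod_cast this
    have hk2' : (k:ℝ) ≤ 2*l := by exact_mod_cast hk2
    rw [abs_le]; constructor <;> push_cast <;> rw [hc] <;> linarith

/-- On the circle `ℝ/ℤ` of circumference `1` with geodesic metric, for an integer `l ≥ 1`
and `t ∈ [0, 1/(2l+1))`, let `β_t` be the set of `2l+1` equally spaced points
`t + j/(2l+1)`, `j = 0,…,2l`. Then (a) `β_t` has diameter exactly `l/(2l+1)`; (b) any
point within distance `l/(2l+1)` of all of `β_t` belongs to `β_t`; and consequently
(c) no point is within distance `< l/(2l+1)` of all of `β_t`. -/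
theorem stmt_10 (l : ℕ) (hl : 1 ≤ l) (t : ℝ)
    (ht : t ∈ Ico (0:ℝ) (1 / (2 * (l:ℝ) + 1)))
    (β : Set (AddCircle (1:ℝ)))
    (hβ : β = (fun j : ℕ => ((t + (j:ℝ) / (2 * (l:ℝ) + 1) : ℝ) : AddCircle (1:ℝ))) ''
      {j : ℕ | j ≤ 2 * l}) :
    Metric.diam β = (l:ℝ) / (2 * (l:ℝ) + 1) ∧
    (∀ x : AddCircle (1:ℝ), (∀ y ∈ β, dist x y ≤ (l:ℝ) / (2 * (l:ℝ) + 1)) → x ∈ β) ∧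
    ¬ ∃ x : AddCircle (1:ℝ), ∀ y ∈ β, dist x y < (l:ℝ) / (2 * (l:ℝ) + 1) := by
  obtain ⟨ht0, ht1⟩ := ht
  have hl1 : (1:ℝ) ≤ l := by exact_mod_cast hl
  set c : ℝ := 2 * (l:ℝ) + 1 with hc
  have hc0 : (0:ℝ) < c := by rw [hc]; linarith
  have hlc : (l:ℝ)/c < 1/2 := by
    rw [div_lt_iff₀ hc0, hc]; linarith
  have hlc0 : (0:ℝ) ≤ (l:ℝ)/c := by positivity
  -- distance formula
  have hdist : ∀ a b : ℝ, dist ((a : ℝ) : AddCircle (1:ℝ)) ((b:ℝ) : AddCircle (1:ℝ)) =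
      |(a - b) - round (a - b)| := by
    intro a b
    rw [dist_eq_norm, ← AddCircle.coe_sub, AddCircle.norm_eq]
    norm_num
  -- pairwise distances between grid points
  have hgrid : ∀ i j : ℕ, i ≤ 2*l → j ≤ 2*l →
      dist ((↑(t + (i:ℝ)/c) : AddCircle (1:ℝ))) (↑(t + (j:ℝ)/c)) ≤ (l:ℝ)/c := by
    intro i j hi hj
    rw [hdist]
    have hab : (t + (i:ℝ)/c) - (t + (j:ℝ)/c) = (((i:ℤ) - (j:ℤ) : ℤ):ℝ)/c := by
      push_cast; ring
    rw [hab]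
    obtain ⟨z, hz⟩ := helperG l hl ((i:ℤ) - j) (by omega) (by omega)
    exact (round_le _ z).trans hz
  -- exact distance for difference ± l/c
  have hDex : ∀ d : ℝ, (d = (l:ℝ)/c ∨ d = -((l:ℝ)/c)) → |d - round d| = (l:ℝ)/c := by
    intro d hd
    have hr : round d = 0 := by
      rw [round_eq_zero_iff]
      rcases hd with rfl | rfl
      · exact ⟨by linarith, by linarith⟩
      · exact ⟨by linarith, by linarith⟩
    rw [hr, Int.cast_zero, sub_zero]
    rcases hd with rfl | rfl
    · exact abs_of_nonneg hlc0
    · rw [abs_neg]; exact abs_of_nonneg hlc0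
  -- membership of grid points
  have hmem : ∀ j : ℕ, j ≤ 2*l → ((↑(t + (j:ℝ)/c) : AddCircle (1:ℝ))) ∈ β := by
    intro j hj
    rw [hβ]
    exact ⟨j, hj, rfl⟩
  have hfin : β.Finite := by
    rw [hβ]
    exact (Set.finite_Iic (2*l)).image _
  -- part (a)
  have parta : Metric.diam β = (l:ℝ)/c := by
    apply le_antisymm
    · apply Metric.diam_le_of_forall_dist_le hlc0
      intro x hx y hy
      rw [hβ] at hx hy
      obtain ⟨i, hi, rfl⟩ := hx
      obtain ⟨j, hj, rfl⟩ := hy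
      exact hgrid i j hi hj
    · have h0 : ((↑(t + (0:ℕ)/c) : AddCircle (1:ℝ))) ∈ β := hmem 0 (by omega)
      have hL : ((↑(t + (l:ℝ)/c) : AddCircle (1:ℝ))) ∈ β := hmem l (by omega)
      have hdd : dist ((↑(t + (l:ℝ)/c) : AddCircle (1:ℝ))) (↑(t + (0:ℕ)/c)) = (l:ℝ)/c := by
        rw [hdist]
        have : (t + (l:ℝ)/c) - (t + (0:ℕ)/c) = (l:ℝ)/c := by push_cast; ring
        rw [this]
        exact hDex _ (Or.inl rfl)
      calc (l:ℝ)/c = _ := hdd.symm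
        _ ≤ Metric.diam β := Metric.dist_le_diam_of_mem hfin.isBounded hL h0
  -- part (b)
  have partb : ∀ x : AddCircle (1:ℝ), (∀ y ∈ β, dist x y ≤ (l:ℝ)/c) → x ∈ β := by
    intro x hx
    induction x using QuotientAddGroup.induction_on with
    | H r =>
    set u : ℝ := Int.fract (r - t) with hu
    have hu0 : 0 ≤ u := Int.fract_nonneg _
    have hu1 : u < 1 := Int.fract_lt_one _
    have hxeq : ((r : ℝ) : AddCircle (1:ℝ)) = ↑(t + u) := by
      have h1 : ((((⌊r - t⌋ : ℤ)) : ℝ) : AddCircle (1:ℝ)) = 0 := by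
        rw [AddCircle.coe_eq_zero_iff]
        exact ⟨⌊r - t⌋, by simp⟩
      have h2 : (r : ℝ) = (t + u) + ((⌊r - t⌋ : ℤ) : ℝ) := by
        rw [hu, Int.fract]; push_cast; ring
      calc ((r : ℝ) : AddCircle (1:ℝ)) = ↑((t + u) + ((⌊r - t⌋ : ℤ) : ℝ)) := by rw [← h2]
        _ = ↑(t + u) + ((((⌊r - t⌋ : ℤ)) : ℝ) : AddCircle (1:ℝ)) := by
            push_cast
            rfl
        _ = ↑(t + u) := by rw [h1, add_zero]
    rw [hxeq] at hx ⊢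
    set J : ℤ := ⌊u * c⌋ with hJ
    have hJ0 : 0 ≤ J := Int.floor_nonneg.mpr (by positivity)
    have hJr : (J:ℝ) ≤ u * c := Int.floor_le _
    have hJr2 : u * c < J + 1 := Int.lt_floor_add_one _
    have hJle : J ≤ 2*l := by
      have h3 : u * c < c := by
        calc u * c < 1 * c := by exact mul_lt_mul_of_pos_right hu1 hc0
          _ = c := one_mul c
      have h4 : (J:ℝ) < 2*(l:ℝ) + 1 := by rw [← hc]; linarith
      have : J < 2*(l:ℤ) + 1 := by exact_mod_cast h4
      omega
    set j : ℕ := J.toNat with hj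
    have hjcast : (j:ℝ) = (J:ℝ) := by
      rw [hj]; exact_mod_cast Int.toNat_of_nonneg hJ0
    have hj2l : j ≤ 2*l := by omega
    have hjlow : (j:ℝ)/c ≤ u := by
      rw [div_le_iff₀ hc0, hjcast]; linarith
    have hjhigh : u < ((j:ℝ)+1)/c := by
      rw [lt_div_iff₀ hc0, hjcast]; linarith
    set w : ℝ := u - (j:ℝ)/c with hw
    have hw0 : 0 ≤ w := by rw [hw]; linarith
    have hw1 : w < 1/c := by
      rw [hw]
      have : ((j:ℝ)+1)/c = (j:ℝ)/c + 1/c := by ring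
      linarith [this ▸ hjhigh]
    by_cases hwz : w = 0
    · have huj : u = (j:ℝ)/c := by rw [hw] at hwz; linarith
      rw [huj]
      exact hmem j hj2l
    · exfalso
      have hw0' : 0 < w := lt_of_le_of_ne hw0 (Ne.symm hwz)
      set k : ℕ := if j + l + 1 ≤ 2*l then j + l + 1 else j - l with hk
      have hk2l : k ≤ 2*l := by rw [hk]; split_ifs <;> omega
      have hd := hx _ (hmem k hk2l)
      rw [hdist] at hd
      obtain ⟨e, heq⟩ : ∃ e : ℤ, (t + u) - (t + (k:ℝ)/c) = w + (l:ℝ)/c - e := by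
        rw [hk]
        split_ifs with hcase
        · refine ⟨1, ?_⟩
          have hkc : ((j + l + 1 : ℕ):ℝ) = (j:ℝ) + l + 1 := by push_cast; ring
          rw [hkc, hw]
          push_cast
          field_simp
          rw [hc]; ring
        · have hjl : l ≤ j := by omega
          refine ⟨0, ?_⟩
          have hkc : ((j - l : ℕ):ℝ) = (j:ℝ) - l := by
            exact Nat.cast_sub hjl
          rw [hkc, hw]
          push_cast
          ring
      rw [heq] at hd
      set m : ℤ := e + round (w + (l:ℝ)/c - (e:ℝ)) with hm
      have hrw : w + (l:ℝ)/c - (e:ℝ) - round (w + (l:ℝ)/c - (e:ℝ)) = w + (l:ℝ)/c - (m:ℝ) := by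
        rw [hm]; push_cast; ring
      rw [hrw] at hd
      exact absurd hd (not_le.mpr (helperH l hl w hw0' hw1 m))
  refine ⟨parta, partb, ?_⟩
  -- part (c)
  rintro ⟨x, hx⟩
  have hxβ : x ∈ β := partb x (fun y hy => (hx y hy).le)
  rw [hβ] at hxβ
  obtain ⟨j, hj, rfl⟩ := hxβ
  simp only [mem_setOf_eq] at hj
  set k : ℕ := if j + l ≤ 2*l then j + l else j - l with hk
  have hk2l : k ≤ 2*l := by rw [hk]; split_ifs <;> omega
  have hd := hx _ (hmem k hk2l)
  have hdd : dist ((↑(t + (j:ℝ)/c) : AddCircle (1:ℝ))) (↑(t + (k:ℝ)/c)) = (l:ℝ)/c := by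
    rw [hdist]
    have hsub : (t + (j:ℝ)/c) - (t + (k:ℝ)/c) = ((j:ℝ) - k)/c := by ring
    rw [hsub]
    apply hDex
    rw [hk]
    split_ifs with hcase
    · right
      have : ((j + l : ℕ):ℝ) = (j:ℝ) + l := by push_cast; ring
      rw [this]; ring_nf
    · left
      have hjl : l ≤ j := by omega
      have : ((j - l : ℕ):ℝ) = (j:ℝ) - l := by
        exact Nat.cast_sub hjl
      rw [this]; ring_nf
  rw [hdd] at hd
  exact lt_irrefl _ hd
end

section
/- Let X be a metric space, A ⊆ X a closed subspace, and f : X → A a strict contraction onto A. Let S ⊆ A be a finite subset and r > 0 such that there exists no point a ∈ A with d(a, y) < r for all y ∈ S. Then there also exists no point x ∈ X \ A such that d(x, y) ≤ r for all y ∈ S. In particular, any x ∈ X with d(x,y) ≤ r for all y ∈ S must lie in A. -/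
/-- Let `A ⊆ X` be closed and `f : X → A` a strict contraction onto `A`. If `S ⊆ A` is a
finite nonempty subset and `r > 0` is such that no point `a ∈ A` satisfies
`d(a,y) < r` for all `y ∈ S`, then no point `x ∈ X \ A` satisfies `d(x,y) ≤ r` for all
`y ∈ S`; in particular any `x ∈ X` with `d(x,y) ≤ r` for all `y ∈ S` lies in `A`. -/
theorem stmt_11 {X : Type*} [MetricSpace X] (A : Set X) (hA : IsClosed A)
    (f : X → X) (hfA : ∀ x : X, f x ∈ A) (hfid : ∀ a ∈ A, f a = a)
    (hstrict : ∀ x y : X, y ∉ A → x ≠ y → dist (f x) (f y) < dist x y)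
    (S : Finset X) (hS : ↑S ⊆ A) (hSne : S.Nonempty) (r : ℝ) (hr : 0 < r)
    (h : ¬ ∃ a ∈ A, ∀ y ∈ S, dist a y < r) :
    (¬ ∃ x : X, x ∉ A ∧ ∀ y ∈ S, dist x y ≤ r) ∧
    (∀ x : X, (∀ y ∈ S, dist x y ≤ r) → x ∈ A) := by
  have key : ∀ x : X, x ∉ A → ¬ (∀ y ∈ S, dist x y ≤ r) := by
    intro x hx hle
    apply h
    refine ⟨f x, hfA x, fun y hy => ?_⟩
    have hyA : y ∈ A := hS hy
    have hne : y ≠ x := fun e => hx (e ▸ hyA)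
    have := hstrict y x hx hne
    rw [hfid y hyA] at this
    calc dist (f x) y = dist (f y) (f x) := by rw [hfid y hyA, dist_comm]
      _ < dist y x := hstrict y x hx hne
      _ = dist x y := dist_comm y x
      _ ≤ r := hle y hy
  exact ⟨fun ⟨x, hx, hle⟩ => key x hx hle,
    fun x hle => by by_contra hx; exact key x hx hle⟩
end

section
/- Let S be the circle of circumference 1 with geodesic metric, X a metric space containing S isometrically, l ≥ 1 an integer, and suppose there is a strict contraction f from the closed (l/(2l+1))-neighborhood of S in X onto S. Then for each t ∈ [0, 1/(2l+1)), the set β_t = {(t + j/(2l+1)) mod 1 : j = 0,…,2l} is a maximal simplex of the closed Vietoris–Rips complex Rips-closed(X, l/(2l+1)): no point z ∈ X \ β_t satisfies d(z, y) ≤ l/(2l+1) for all y ∈ β_t. -/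
open Set

private lemma circ_dist (a b : ℝ) :
    dist ((a : AddCircle (1:ℝ))) ((b : AddCircle (1:ℝ))) = |(a - b) - round (a - b)| := by
  rw [dist_eq_norm, ← AddCircle.coe_sub, AddCircle.norm_eq]
  norm_num

private lemma coe_int_zero (n : ℤ) : (((n : ℝ)) : AddCircle (1:ℝ)) = 0 := by
  rw [AddCircle.coe_eq_zero_iff]
  exact ⟨n, by simp⟩

private lemma keyB (l : ℕ) (hl : 1 ≤ l) (D : ℝ)
    (h1 : (l:ℝ)/(2*(l:ℝ)+1) < D) (h2 : D < ((l:ℝ)+1)/(2*(l:ℝ)+1)) (m : ℤ) :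
    (l:ℝ)/(2*(l:ℝ)+1) < |D - m| := by
  have hl1 : (1:ℝ) ≤ l := by exact_mod_cast hl
  have hQ : (0:ℝ) < 2*(l:ℝ)+1 := by linarith
  have hsum : ((l:ℝ)+1)/(2*(l:ℝ)+1) + (l:ℝ)/(2*(l:ℝ)+1) = 1 := by
    field_simp
    ring
  rcases le_or_gt ((m:ℝ)) 0 with hm | hm
  · calc (l:ℝ)/(2*(l:ℝ)+1) < D := h1
      _ ≤ D - m := by linarith
      _ ≤ |D - m| := le_abs_self _
  · have hm0 : 0 < m := by exact_mod_cast hm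
    have hm1 : (1:ℝ) ≤ m := by exact_mod_cast hm0
    have hlt : (l:ℝ)/(2*(l:ℝ)+1) < (m:ℝ) - D := by linarith
    calc (l:ℝ)/(2*(l:ℝ)+1) < (m:ℝ) - D := hlt
      _ ≤ |D - m| := by rw [abs_sub_comm]; exact le_abs_self _

private lemma keyC (l : ℕ) (hl : 1 ≤ l) (m : ℤ) :
    (l:ℝ)/(2*(l:ℝ)+1) ≤ |(l:ℝ)/(2*(l:ℝ)+1) - m| := by
  have hl1 : (1:ℝ) ≤ l := by exact_mod_cast hl
  have hQ : (0:ℝ) < 2*(l:ℝ)+1 := by linarith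
  have hr1 : (l:ℝ)/(2*(l:ℝ)+1) ≤ 1/2 := by
    rw [div_le_div_iff₀ hQ (by norm_num)]; linarith
  have hr0 : 0 < (l:ℝ)/(2*(l:ℝ)+1) := by positivity
  rcases eq_or_ne m 0 with rfl | hm
  · simp [abs_of_pos hr0]
  · have h1 : (1:ℝ) ≤ |(m:ℝ)| := by
      have := Int.one_le_abs hm
      calc (1:ℝ) = ((1:ℤ):ℝ) := by norm_num
        _ ≤ ((|m|:ℤ):ℝ) := by exact_mod_cast this
        _ = |(m:ℝ)| := by push_cast; ring
    have h2 := abs_sub_abs_le_abs_sub ((m:ℝ)) ((l:ℝ)/(2*(l:ℝ)+1))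
    have h3 : |(m:ℝ) - (l:ℝ)/(2*(l:ℝ)+1)| = |(l:ℝ)/(2*(l:ℝ)+1) - (m:ℝ)| := abs_sub_comm _ _
    rw [h3] at h2
    rw [abs_of_pos hr0] at h2
    linarith

private lemma key (l : ℕ) (hl : 1 ≤ l) (t : ℝ) (x : AddCircle (1:ℝ))
    (h : ∀ j : ℕ, j ≤ 2*l →
      dist x (((t + (j:ℝ)/(2*(l:ℝ)+1) : ℝ)) : AddCircle (1:ℝ)) ≤ (l:ℝ)/(2*(l:ℝ)+1)) :
    ∃ j : ℕ, j ≤ 2*l ∧ x = (((t + (j:ℝ)/(2*(l:ℝ)+1) : ℝ)) : AddCircle (1:ℝ)) := by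
  have hl1 : (1:ℝ) ≤ l := by exact_mod_cast hl
  have hQ : (0:ℝ) < 2*(l:ℝ)+1 := by linarith
  obtain ⟨u, rfl⟩ := QuotientAddGroup.mk_surjective x
  set v : ℝ := Int.fract (u - t) with hv
  have hv0 : 0 ≤ v := Int.fract_nonneg _
  have hv1 : v < 1 := Int.fract_lt_one _
  have hx : ((u : ℝ) : AddCircle (1:ℝ)) = ((t + v : ℝ) : AddCircle (1:ℝ)) := by
    have h1 : u = (t + v) + ((⌊u - t⌋ : ℤ) : ℝ) := by
      rw [hv]; unfold Int.fract; ring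
    rw [show ((u:ℝ) : AddCircle (1:ℝ)) = (((t + v) + ((⌊u - t⌋ : ℤ) : ℝ) : ℝ) : AddCircle (1:ℝ)) by rw [← h1],
      AddCircle.coe_add, coe_int_zero, add_zero]
  set K : ℤ := ⌊(2*(l:ℝ)+1) * v⌋ with hK
  have hK0 : 0 ≤ K := Int.le_floor.mpr (by push_cast; positivity)
  have hKle : K < 2*(l:ℤ)+1 := by
    rw [hK, Int.floor_lt]
    push_cast
    nlinarith
  set k : ℕ := K.toNat with hk
  have hkK : (k : ℤ) = K := Int.toNat_of_nonneg hK0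
  have hk2l : k ≤ 2*l := by omega
  have hkr : ((k:ℝ)) = ((K:ℤ):ℝ) := by exact_mod_cast congrArg (fun z : ℤ => (z:ℝ)) hkK
  have hfl := Int.floor_le ((2*(l:ℝ)+1) * v)
  have hfu := Int.lt_floor_add_one ((2*(l:ℝ)+1) * v)
  rw [← hK] at hfl hfu
  have hk1 : (k:ℝ)/(2*(l:ℝ)+1) ≤ v := by
    rw [div_le_iff₀ hQ, hkr]
    linarith [mul_comm v (2*(l:ℝ)+1)]
  have hk2 : v < ((k:ℝ)+1)/(2*(l:ℝ)+1) := by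
    rw [lt_div_iff₀ hQ, hkr]
    linarith [mul_comm v (2*(l:ℝ)+1)]
  by_cases hveq : v = (k:ℝ)/(2*(l:ℝ)+1)
  · exact ⟨k, hk2l, by rw [hx, hveq]⟩
  · exfalso
    have hlt : (k:ℝ)/(2*(l:ℝ)+1) < v := lt_of_le_of_ne hk1 (Ne.symm hveq)
    set j₁ : ℕ := (k + l + 1) % (2*l+1) with hj₁
    have hj₁le : j₁ ≤ 2*l := by
      have := Nat.mod_lt (k + l + 1) (show 0 < 2*l+1 by omega)
      omega
    set c : ℕ := (k + l + 1) / (2*l+1) with hc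
    have hnat : j₁ + (2*l+1) * c = k + l + 1 := Nat.mod_add_div _ _
    have hsplit : (j₁:ℝ) + (2*(l:ℝ)+1) * (c:ℝ) = (k:ℝ) + (l:ℝ) + 1 := by
      exact_mod_cast hnat
    have hdist := h j₁ hj₁le
    rw [hx, circ_dist] at hdist
    have harg : (t + v) - (t + (j₁:ℝ)/(2*(l:ℝ)+1)) = v - (j₁:ℝ)/(2*(l:ℝ)+1) := by ring
    rw [harg] at hdist
    set d : ℝ := v - (j₁:ℝ)/(2*(l:ℝ)+1) with hd
    set D : ℝ := ((k:ℝ)+(l:ℝ)+1)/(2*(l:ℝ)+1) - v with hD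
    have hD1 : (l:ℝ)/(2*(l:ℝ)+1) < D := by
      rw [hD]
      have : ((k:ℝ)+(l:ℝ)+1)/(2*(l:ℝ)+1) - ((k:ℝ)+1)/(2*(l:ℝ)+1) = (l:ℝ)/(2*(l:ℝ)+1) := by ring
      linarith
    have hD2 : D < ((l:ℝ)+1)/(2*(l:ℝ)+1) := by
      rw [hD]
      have : ((k:ℝ)+(l:ℝ)+1)/(2*(l:ℝ)+1) - (k:ℝ)/(2*(l:ℝ)+1) = ((l:ℝ)+1)/(2*(l:ℝ)+1) := by ring
      linarith
    have hkey := keyB l hl D hD1 hD2 ((c:ℤ) - round d)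
    have heq : d - (round d : ℝ) = -(D - (((c:ℤ) - round d : ℤ) : ℝ)) := by
      rw [hd, hD]
      have hj : (j₁:ℝ) = ((k:ℝ) + (l:ℝ) + 1) - (2*(l:ℝ)+1)*(c:ℝ) := by linarith
      rw [hj]
      push_cast
      field_simp
      ring
    rw [heq, abs_neg] at hdist
    linarith

private lemma key2 (l : ℕ) (hl : 1 ≤ l) (t : ℝ) (x : AddCircle (1:ℝ))
    (h : ∀ j : ℕ, j ≤ 2*l →
      dist x (((t + (j:ℝ)/(2*(l:ℝ)+1) : ℝ)) : AddCircle (1:ℝ)) < (l:ℝ)/(2*(l:ℝ)+1)) :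
    False := by
  have hQ : (0:ℝ) < 2*(l:ℝ)+1 := by positivity
  obtain ⟨k, hk, rfl⟩ := key l hl t x (fun j hj => (h j hj).le)
  set j₂ : ℕ := (k + l) % (2*l+1) with hj₂
  have hj₂le : j₂ ≤ 2*l := by
    have := Nat.mod_lt (k + l) (show 0 < 2*l+1 by omega)
    omega
  set c : ℕ := (k + l) / (2*l+1) with hc
  have hnat : j₂ + (2*l+1) * c = k + l := Nat.mod_add_div _ _
  have hsplit : (j₂:ℝ) + (2*(l:ℝ)+1) * (c:ℝ) = (k:ℝ) + (l:ℝ) := by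
    exact_mod_cast hnat
  have hdist := h j₂ hj₂le
  rw [circ_dist] at hdist
  set d : ℝ := (t + (k:ℝ)/(2*(l:ℝ)+1)) - (t + (j₂:ℝ)/(2*(l:ℝ)+1)) with hd
  have heq : d - (round d : ℝ) = -((l:ℝ)/(2*(l:ℝ)+1) - (((c:ℤ) - round d : ℤ) : ℝ)) := by
    rw [hd]
    have hj : (j₂:ℝ) = ((k:ℝ) + (l:ℝ)) - (2*(l:ℝ)+1)*(c:ℝ) := by linarith
    rw [hj]
    push_cast
    field_simp
    ring
  rw [heq, abs_neg] at hdist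
  exact absurd hdist (not_lt.mpr (keyC l hl ((c:ℤ) - round d)))

/-- Let `S` be an isometrically embedded circle of circumference `1` (image of
`ι : ℝ/ℤ → X`), `l ≥ 1`, and suppose `f` is a strict contraction of the closed
`l/(2l+1)`-neighborhood of `S` in `X` onto `S`. Then for each `t ∈ [0, 1/(2l+1))` the set
`β_t` of `2l+1` equally spaced points is a maximal simplex of the closed Vietoris–Rips
complex `Rips-closed(X, l/(2l+1))`: no point `z ∈ X \ β_t` is within distance `l/(2l+1)`
of every point of `β_t`. -/
theorem stmt_12 {X : Type*} [MetricSpace X] (l : ℕ) (hl : 1 ≤ l)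
    (ι : AddCircle (1:ℝ) → X) (hι : Isometry ι)
    (S Nbar : Set X) (hSdef : S = Set.range ι)
    (hNdef : Nbar = {x : X | ∃ s ∈ S, dist x s ≤ (l:ℝ) / (2 * (l:ℝ) + 1)})
    (f : X → X)
    (hf1 : ∀ x ∈ Nbar, f x ∈ S)
    (hf2 : ∀ s ∈ S, f s = s)
    (hf3 : ∀ x ∈ Nbar, ∀ y ∈ Nbar, y ∉ S → x ≠ y → dist (f x) (f y) < dist x y) :
    ∀ t ∈ Ico (0:ℝ) (1 / (2 * (l:ℝ) + 1)),
      ∀ z : X,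
        z ∉ ι '' ((fun j : ℕ => ((t + (j:ℝ) / (2 * (l:ℝ) + 1) : ℝ) : AddCircle (1:ℝ))) ''
          {j : ℕ | j ≤ 2 * l}) →
        ¬ ∀ y ∈ ι '' ((fun j : ℕ =>
            ((t + (j:ℝ) / (2 * (l:ℝ) + 1) : ℝ) : AddCircle (1:ℝ))) '' {j : ℕ | j ≤ 2 * l}),
          dist z y ≤ (l:ℝ) / (2 * (l:ℝ) + 1) := by
  intro t ht z hz hall
  have hl1 : (1:ℝ) ≤ l := by exact_mod_cast hl
  have hQ : (0:ℝ) < 2*(l:ℝ)+1 := by linarith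
  have hr0 : (0:ℝ) ≤ (l:ℝ)/(2*(l:ℝ)+1) := by positivity
  set p : ℕ → AddCircle (1:ℝ) :=
    fun j : ℕ => ((t + (j:ℝ) / (2 * (l:ℝ) + 1) : ℝ) : AddCircle (1:ℝ)) with hp
  have hmem : ∀ j : ℕ, j ≤ 2*l →
      ι (p j) ∈ ι '' (p '' {j : ℕ | j ≤ 2 * l}) := fun j hj => ⟨p j, ⟨j, hj, rfl⟩, rfl⟩
  have hS : ∀ j : ℕ, ι (p j) ∈ S := fun j => by rw [hSdef]; exact mem_range_self _
  have hdist : ∀ j : ℕ, j ≤ 2*l → dist z (ι (p j)) ≤ (l:ℝ)/(2*(l:ℝ)+1) :=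
    fun j hj => hall _ (hmem j hj)
  by_cases hzS : z ∈ S
  · obtain ⟨w, rfl⟩ : ∃ w, ι w = z := by rw [hSdef] at hzS; exact hzS
    have hw : ∀ j : ℕ, j ≤ 2*l → dist w (p j) ≤ (l:ℝ)/(2*(l:ℝ)+1) := fun j hj => by
      rw [← hι.dist_eq]; exact hdist j hj
    obtain ⟨k, hk, hwk⟩ := key l hl t w hw
    exact hz ⟨p k, ⟨k, hk, rfl⟩, by rw [hwk]⟩
  · have hzN : z ∈ Nbar := by
      rw [hNdef]; exact ⟨ι (p 0), hS 0, hdist 0 (by omega)⟩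
    have hfz : f z ∈ S := hf1 z hzN
    obtain ⟨w, hw⟩ : ∃ w, ι w = f z := by rw [hSdef] at hfz; exact hfz
    have hstrict : ∀ j : ℕ, j ≤ 2*l → dist w (p j) < (l:ℝ)/(2*(l:ℝ)+1) := by
      intro j hj
      have hpjN : ι (p j) ∈ Nbar := by
        rw [hNdef]; exact ⟨ι (p j), hS j, by simp [hr0]⟩
      have hne : ι (p j) ≠ z := fun he => hzS (he ▸ hS j)
      have h3 := hf3 (ι (p j)) hpjN z hzN hzS hne
      rw [hf2 _ (hS j), ← hw] at h3
      have h2 : dist (ι (p j)) z ≤ (l:ℝ)/(2*(l:ℝ)+1) := by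
        rw [dist_comm]; exact hdist j hj
      calc dist w (p j) = dist (ι w) (ι (p j)) := (hι.dist_eq _ _).symm
        _ = dist (ι (p j)) (ι w) := dist_comm _ _
        _ < dist (ι (p j)) z := h3
        _ ≤ (l:ℝ)/(2*(l:ℝ)+1) := h2
    exact key2 l hl t w hstrict
end

section
/- Let X be a geodesic metric space, let N_1 ⊆ N_2 ⊆ X be subsets with N_1 closed in X, and suppose F : (N_2 \ int(N_1)) × [0,1] → N_2 \ int(N_1) is a deformation contraction onto ∂N_1, with the additional property that for every x ∈ N_2 \ N_1 and y ∈ N_1, every geodesic in X from x to y meets ∂N_1. Define G : N_2 × [0,1] → N_2 by G(x,t) = F(x,t) for x ∈ N_2 \ int(N_1) and G(y,t) = y for y ∈ N_1. Then G is a deformation contraction of N_2 onto N_1; in particular, for all x ∈ N_2 \ N_1, y ∈ N_1, and t' > t one has d(G(x,t'), G(y,t')) ≤ d(G(x,t), G(y,t)). -/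
open Set

/-- Gluing a deformation contraction: if `X` is geodesic, `N₁ ⊆ N₂`, `N₁` closed,
`F : (N₂ \ int N₁) × [0,1] → N₂ \ int N₁` is a deformation contraction onto `∂N₁`, and
every geodesic from a point of `N₂ \ N₁` to a point of `N₁` meets `∂N₁`, then the map `G`
defined by `G(x,t) = F(x,t)` on `N₂ \ int N₁` and `G(y,t) = y` on `N₁` is a deformation
contraction of `N₂` onto `N₁`; in particular the distances `d(G(x,t), G(y,t))` are
non-increasing in `t`. -/
theorem stmt_13 {X : Type*} [MetricSpace X]
    (hgeo : ∀ x y : X, x ≠ y → ∃ g : ℝ → X,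
      (∀ s ∈ Icc 0 (dist x y), ∀ t ∈ Icc 0 (dist x y), dist (g s) (g t) = |s - t|) ∧
      g 0 = x ∧ g (dist x y) = y)
    (N₁ N₂ : Set X) (hc : IsClosed N₁) (h12 : N₁ ⊆ N₂)
    (F : X → ℝ → X)
    (hF0 : ∀ x ∈ N₂ \ interior N₁, F x 0 = x)
    (hF1 : ∀ x ∈ N₂ \ interior N₁, F x 1 ∈ frontier N₁)
    (hFmem : ∀ x ∈ N₂ \ interior N₁, ∀ t ∈ Icc (0:ℝ) 1, F x t ∈ N₂ \ interior N₁)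
    (hFb : ∀ b ∈ frontier N₁, ∀ t ∈ Icc (0:ℝ) 1, F b t = b)
    (hFmono : ∀ x ∈ N₂ \ interior N₁, ∀ y ∈ N₂ \ interior N₁,
      ∀ t ∈ Icc (0:ℝ) 1, ∀ t' ∈ Icc (0:ℝ) 1, t ≤ t' →
      dist (F x t') (F y t') ≤ dist (F x t) (F y t))
    (hmeet : ∀ x ∈ N₂ \ N₁, ∀ y ∈ N₁, ∀ g : ℝ → X,
      (∀ s ∈ Icc 0 (dist x y), ∀ t ∈ Icc 0 (dist x y), dist (g s) (g t) = |s - t|) →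
      g 0 = x → g (dist x y) = y → ∃ s ∈ Icc 0 (dist x y), g s ∈ frontier N₁)
    (G : X → ℝ → X)
    (hG1 : ∀ x ∈ N₂ \ interior N₁, ∀ t : ℝ, G x t = F x t)
    (hG2 : ∀ y ∈ N₁, ∀ t : ℝ, G y t = y) :
    (∀ x ∈ N₂, G x 0 = x) ∧
    (∀ x ∈ N₂, G x 1 ∈ N₁) ∧
    (∀ x ∈ N₂, ∀ t ∈ Icc (0:ℝ) 1, G x t ∈ N₂) ∧
    (∀ y ∈ N₁, ∀ t ∈ Icc (0:ℝ) 1, G y t = y) ∧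
    (∀ x ∈ N₂, ∀ y ∈ N₂, ∀ t ∈ Icc (0:ℝ) 1, ∀ t' ∈ Icc (0:ℝ) 1, t ≤ t' →
      dist (G x t') (G y t') ≤ dist (G x t) (G y t)) := by
  -- Basic facts
  have hfr : frontier N₁ ⊆ N₂ \ interior N₁ := fun b hb =>
    ⟨h12 (hc.frontier_subset hb), hb.2⟩
  have hnin : ∀ x ∈ N₂, x ∉ N₁ → x ∈ N₂ \ interior N₁ := fun x hx hx1 =>
    ⟨hx, fun h => hx1 (interior_subset h)⟩
  -- key distance monotonicity lemma for x ∈ N₂ \ interior N₁, y ∈ N₁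
  have key : ∀ x ∈ N₂ \ interior N₁, ∀ y ∈ N₁, ∀ t ∈ Icc (0:ℝ) 1, ∀ t' ∈ Icc (0:ℝ) 1,
      t ≤ t' → dist (F x t') y ≤ dist (F x t) y := by
    intro x hx y hy t ht t' ht' htt
    set z := F x t with hz
    have hzmem : z ∈ N₂ \ interior N₁ := hFmem x hx t ht
    by_cases hzN : z ∈ N₁
    · -- z is on the frontier, so F x t' = z
      have hzfr : z ∈ frontier N₁ := ⟨subset_closure hzN, hzmem.2⟩
      have h1 : F z t = z := hFb z hzfr t ht
      have h2 : F z t' = z := hFb z hzfr t' ht'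
      have := hFmono x hx z hzmem t ht t' ht' htt
      rw [h1, h2, ← hz, dist_self] at this
      have heq : F x t' = z := by
        have := dist_le_zero.mp this
        exact this
      rw [heq]
    · -- z ∉ N₁ : use a geodesic from z to y and its frontier point
      have hzy : z ≠ y := fun h => hzN (h ▸ hy)
      obtain ⟨g, hgiso, hg0, hgD⟩ := hgeo z y hzy
      obtain ⟨s, hs, hsfr⟩ := hmeet z ⟨hzmem.1, hzN⟩ y hy g hgiso hg0 hgD
      set w := g s with hw
      have hD : (0:ℝ) ≤ dist z y := dist_nonneg
      have hzw : dist z w = s := by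
        have := hgiso 0 ⟨le_refl 0, hD⟩ s hs
        rw [hg0] at this
        rw [hw, this, abs_sub_comm, abs_of_nonneg (by simpa using hs.1)]
        simp
      have hwy : dist w y = dist z y - s := by
        have := hgiso s hs (dist z y) ⟨hD, le_refl _⟩
        rw [hgD] at this
        rw [hw, this, abs_of_nonpos (by linarith [hs.2])]
        ring
      have hadd : dist z y = dist z w + dist w y := by rw [hzw, hwy]; ring
      have hwmem : w ∈ N₂ \ interior N₁ := hfr hsfr
      have hwt : F w t = w := hFb w hsfr t ht
      have hwt' : F w t' = w := hFb w hsfr t' ht'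
      have hmono := hFmono x hx w hwmem t ht t' ht' htt
      rw [hwt, hwt', ← hz] at hmono
      calc dist (F x t') y ≤ dist (F x t') w + dist w y := dist_triangle _ _ _
        _ ≤ dist z w + dist w y := by linarith
        _ = dist z y := hadd.symm
  refine ⟨?_, ?_, ?_, ?_, ?_⟩
  · intro x hx
    by_cases h1 : x ∈ N₁
    · exact hG2 x h1 0
    · rw [hG1 x (hnin x hx h1) 0, hF0 x (hnin x hx h1)]
  · intro x hx
    by_cases h1 : x ∈ N₁
    · rw [hG2 x h1 1]; exact h1
    · rw [hG1 x (hnin x hx h1) 1]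
      exact hc.frontier_subset (hF1 x (hnin x hx h1))
  · intro x hx t ht
    by_cases h1 : x ∈ N₁
    · rw [hG2 x h1 t]; exact hx
    · rw [hG1 x (hnin x hx h1) t]
      exact (hFmem x (hnin x hx h1) t ht).1
  · intro y hy t _
    exact hG2 y hy t
  · intro x hx y hy t ht t' ht' htt
    by_cases hx1 : x ∈ N₁ <;> by_cases hy1 : y ∈ N₁
    · rw [hG2 x hx1, hG2 x hx1, hG2 y hy1, hG2 y hy1]
    · rw [hG2 x hx1, hG2 x hx1, hG1 y (hnin y hy hy1), hG1 y (hnin y hy hy1),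
        dist_comm x (F y t'), dist_comm x (F y t)]
      exact key y (hnin y hy hy1) x hx1 t ht t' ht' htt
    · rw [hG2 y hy1, hG2 y hy1, hG1 x (hnin x hx hx1), hG1 x (hnin x hx hx1)]
      exact key x (hnin x hx hx1) y hy1 t ht t' ht' htt
    · rw [hG1 x (hnin x hx hx1), hG1 x (hnin x hx hx1), hG1 y (hnin y hy hy1),
        hG1 y (hnin y hy hy1)]
      exact hFmono x (hnin x hx hx1) y (hnin y hy hy1) t ht t' ht' htt
end

section
/- Let X be a metric space and F : X × [0,1] → X a deformation contraction onto A ⊆ X. For a finite set L ⊆ X (landmarks) and ε > 0, suppose p ∈ ℕ is such that d(F(x, k/p), F(x,(k+1)/p)) < ε for all x ∈ L and k ∈ {0,…,p−1}. Let σ ⊆ L be a finite subset with a witness w ∈ X satisfying max_{z∈σ} d(z,w) < r − ε. Then for every k ∈ {0,…,p−1}: (i) F(w, k/p) witnesses the simplex F_{k/p}(σ) at radius r − ε, i.e., d(F(z,k/p), F(w,k/p)) < r − ε for all z ∈ σ; and (ii) F(w, k/p) witnesses the union F_{k/p}(σ) ∪ F_{(k+1)/p}(σ) at radius r, i.e.,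 d(F(z,(k+1)/p), F(w,k/p)) < r for all z ∈ σ as well. -/
open Set

/-- Let `F` be a deformation contraction of `X` onto `A`, `L` a finite landmark set,
`ε > 0`, and `p ∈ ℕ` such that each landmark moves less than `ε` between consecutive times
`k/p` and `(k+1)/p`. If `σ ⊆ L` has a witness `w` with `d(z,w) < r − ε` for all `z ∈ σ`,
then for every `k < p`: (i) `F(w,k/p)` witnesses `F_{k/p}(σ)` at radius `r − ε`, and
(ii) `F(w,k/p)` witnesses `F_{k/p}(σ) ∪ F_{(k+1)/p}(σ)` at radius `r`. -/
theorem stmt_19 {X : Type*} [MetricSpace X] (A : Set X) (F : X → ℝ → X)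
    (hF0 : ∀ x : X, F x 0 = x)
    (hF1 : ∀ x : X, F x 1 ∈ A)
    (hFA : ∀ a ∈ A, ∀ t ∈ Icc (0:ℝ) 1, F a t = a)
    (hmono : ∀ x y : X, ∀ t ∈ Icc (0:ℝ) 1, ∀ t' ∈ Icc (0:ℝ) 1, t ≤ t' →
      dist (F x t') (F y t') ≤ dist (F x t) (F y t))
    (L : Finset X) (ε : ℝ) (hε : 0 < ε) (p : ℕ) (hp : 0 < p)
    (hstep : ∀ x ∈ L, ∀ k : ℕ, k < p →
      dist (F x ((k:ℝ)/(p:ℝ))) (F x (((k:ℝ)+1)/(p:ℝ))) < ε)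
    (σ : Finset X) (hσL : σ ⊆ L) (r : ℝ) (w : X)
    (hw : ∀ z ∈ σ, dist z w < r - ε) :
    ∀ k : ℕ, k < p →
      (∀ z ∈ σ, dist (F z ((k:ℝ)/(p:ℝ))) (F w ((k:ℝ)/(p:ℝ))) < r - ε) ∧
      (∀ z ∈ σ, dist (F z (((k:ℝ)+1)/(p:ℝ))) (F w ((k:ℝ)/(p:ℝ))) < r) := by
  intro k hk
  have hpR : (0:ℝ) < p := by exact_mod_cast hp
  have hk0 : (0:ℝ) ≤ (k:ℝ)/(p:ℝ) := by positivity
  have hk1 : (k:ℝ)/(p:ℝ) ≤ 1 := by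
    rw [div_le_one hpR]; exact_mod_cast hk.le
  have hmem : (k:ℝ)/(p:ℝ) ∈ Icc (0:ℝ) 1 := ⟨hk0, hk1⟩
  have hi : ∀ z ∈ σ, dist (F z ((k:ℝ)/(p:ℝ))) (F w ((k:ℝ)/(p:ℝ))) < r - ε := by
    intro z hz
    have := hmono z w 0 ⟨le_refl _, zero_le_one⟩ ((k:ℝ)/(p:ℝ)) hmem hk0
    rw [hF0, hF0] at this
    exact lt_of_le_of_lt this (hw z hz)
  refine ⟨hi, fun z hz => ?_⟩
  calc dist (F z (((k:ℝ)+1)/(p:ℝ))) (F w ((k:ℝ)/(p:ℝ)))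
      ≤ dist (F z (((k:ℝ)+1)/(p:ℝ))) (F z ((k:ℝ)/(p:ℝ)))
        + dist (F z ((k:ℝ)/(p:ℝ))) (F w ((k:ℝ)/(p:ℝ))) := dist_triangle _ _ _
    _ < ε + (r - ε) := by
        refine add_lt_add ?_ (hi z hz)
        rw [dist_comm]
        exact hstep z (hσL hz) k hk
    _ = r := by ring
end
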